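/- Let z^+ and z^- be sequences of n nonnegative integers and let B_n denote the set of bi-degree sequences of simple directed graphs on n vertices. Define f_z(a) = Σ_i |z_i^+ - a_i^+| + Σ_i |z_i^- - a_i^-| for a = (a^+, a^-) ∈ B_n. If d ∈ B_n minimizes f_z over B_n, then there exists a minimizer d_* ∈ B_n with d_{*i}^+ ≤ z_i^+ for every i and f_z(d_*) = f_z(d). -/
import Mathlib


open Finset

/-- `(dp, dm)` is the bi-degree sequence of some simple directed graph on `n`
nodes (no loops, no multiple edges). -/
def BiGraphical (n : ℕ) (dp dm : Fin n → ℕ) : Prop :=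
  ∃ A : Fin n → Fin n → ℕ, (∀ i j, A i j ≤ 1) ∧ (∀ i, A i i = 0) ∧
    (∀ i, dp i = ∑ j, A i j) ∧ (∀ i, dm i = ∑ j, A j i)

/-- If `d` minimizes the `L₁` distance `f_z(a) = Σᵢ|zᵢ⁺-aᵢ⁺| + Σᵢ|zᵢ⁻-aᵢ⁻|` over
all bi-graphical sequences, then there is a minimizer `d*` whose out-degrees are
pointwise bounded by `z⁺` and with `f_z(d*) = f_z(d)`. -/
theorem exists_minimizer_outdeg_le (n : ℕ) (zp zm : Fin n → ℕ) (dp dm : Fin n → ℕ)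
    (hd : BiGraphical n dp dm)
    (hmin : ∀ ap am : Fin n → ℕ, BiGraphical n ap am →
      (∑ i, |(zp i : ℤ) - dp i|) + (∑ i, |(zm i : ℤ) - dm i|)
        ≤ (∑ i, |(zp i : ℤ) - ap i|) + (∑ i, |(zm i : ℤ) - am i|)) :
    ∃ ep em : Fin n → ℕ, BiGraphical n ep em ∧ (∀ i, ep i ≤ zp i) ∧
      (∑ i, |(zp i : ℤ) - ep i|) + (∑ i, |(zm i : ℤ) - em i|)
        = (∑ i, |(zp i : ℤ) - dp i|) + (∑ i, |(zm i : ℤ) - dm i|) := by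
  classical
  suffices H : ∀ N : ℕ, ∀ dp dm : Fin n → ℕ, (∑ i, dp i) ≤ N → BiGraphical n dp dm →
      (∀ ap am : Fin n → ℕ, BiGraphical n ap am →
        (∑ i, |(zp i : ℤ) - dp i|) + (∑ i, |(zm i : ℤ) - dm i|)
          ≤ (∑ i, |(zp i : ℤ) - ap i|) + (∑ i, |(zm i : ℤ) - am i|)) →
      ∃ ep em : Fin n → ℕ, BiGraphical n ep em ∧ (∀ i, ep i ≤ zp i) ∧
        (∑ i, |(zp i : ℤ) - ep i|) + (∑ i, |(zm i : ℤ) - em i|)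
          = (∑ i, |(zp i : ℤ) - dp i|) + (∑ i, |(zm i : ℤ) - dm i|) by
    exact H (∑ i, dp i) dp dm le_rfl hd hmin
  intro N
  induction N with
  | zero =>
    intro dp dm hsum hbg hmin
    refine ⟨dp, dm, hbg, fun i => ?_, rfl⟩
    have h0 : dp i = 0 :=
      Finset.sum_eq_zero_iff.mp (Nat.le_zero.mp hsum) i (mem_univ i)
    omega
  | succ N ih =>
    intro dp dm hsum hbg hmin
    by_cases hall : ∀ i, dp i ≤ zp i
    · exact ⟨dp, dm, hbg, hall, rfl⟩
    push_neg at hall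
    obtain ⟨i, hi⟩ := hall
    obtain ⟨A, hA1, hA0, hdp, hdm⟩ := hbg
    have hdpi : 1 ≤ dp i := by omega
    have hpos : (∑ j, A i j) ≠ 0 := by rw [← hdp]; omega
    obtain ⟨j, -, hj⟩ := Finset.exists_ne_zero_of_sum_ne_zero hpos
    have hAij : A i j = 1 := by have := hA1 i j; omega
    have hji : j ≠ i := by
      intro h; rw [h] at hAij; rw [hA0 i] at hAij; omega
    have hdmj : 1 ≤ dm j := by
      rw [hdm]
      calc 1 = A i j := hAij.symm
      _ ≤ ∑ k, A k j := Finset.single_le_sum (f := fun k => A k j) (fun k _ => Nat.zero_le _) (mem_univ i)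
    set A' : Fin n → Fin n → ℕ :=
      Function.update A i (Function.update (A i) j 0) with hA'def
    set dp' : Fin n → ℕ := Function.update dp i (dp i - 1) with hdp'def
    set dm' : Fin n → ℕ := Function.update dm j (dm j - 1) with hdm'def
    have hA'row : ∀ k, k ≠ i → A' k = A k := fun k hk =>
      Function.update_of_ne hk _ _
    have hA'i : A' i = Function.update (A i) j 0 := Function.update_self _ _ _
    -- bi-graphicality of the new pair
    have hbg' : BiGraphical n dp' dm' := by
      refine ⟨A', fun k l => ?_, fun k => ?_, fun k => ?_, fun l => ?_⟩
      · by_cases hk : k = i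
        · rw [hk, hA'i]
          by_cases hl : l = j
          · rw [hl]; simp
          · rw [Function.update_of_ne hl]; exact hA1 i l
        · rw [hA'row k hk]; exact hA1 k l
      · by_cases hk : k = i
        · rw [hk, hA'i, Function.update_of_ne (Ne.symm hji)]; exact hA0 i
        · rw [hA'row k hk]; exact hA0 k
      · by_cases hk : k = i
        · rw [hk]
          rw [hdp'def, Function.update_self, hA'i]
          have h1 : ∑ l, Function.update (A i) j 0 l
              = ∑ l ∈ univ.erase j, A i l := by
            rw [← Finset.add_sum_erase _ _ (mem_univ j), Function.update_self]
            rw [Finset.sum_congr rfl (fun l hl =>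
              Function.update_of_ne (Finset.ne_of_mem_erase hl) _ _)]
            omega
          have h2 : ∑ l, A i l = A i j + ∑ l ∈ univ.erase j, A i l :=
            (Finset.add_sum_erase _ _ (mem_univ j)).symm
          rw [h1]
          rw [hdp i] at hdpi ⊢
          omega
        · rw [hdp'def, Function.update_of_ne hk, hdp k]
          exact Finset.sum_congr rfl fun l _ => by rw [hA'row k hk]
      · by_cases hl : l = j
        · rw [hl]
          rw [hdm'def, Function.update_self]
          have h1 : ∑ k, A' k j = ∑ k ∈ univ.erase i, A k j := by
            rw [← Finset.add_sum_erase _ _ (mem_univ i), hA'i, Function.update_self]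
            rw [Finset.sum_congr rfl (fun k hk =>
              by rw [hA'row k (Finset.ne_of_mem_erase hk)])]
            omega
          have h2 : ∑ k, A k j = A i j + ∑ k ∈ univ.erase i, A k j :=
            (Finset.add_sum_erase _ _ (mem_univ i)).symm
          rw [h1, hdm j, h2, hAij]
          omega
        · rw [hdm'def, Function.update_of_ne hl, hdm l]
          refine Finset.sum_congr rfl fun k _ => ?_
          by_cases hk : k = i
          · rw [hk, hA'i, Function.update_of_ne hl]
          · rw [hA'row k hk]
    -- value comparison
    have hcastp : ((dp i - 1 : ℕ) : ℤ) = (dp i : ℤ) - 1 := by omega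
    have hcastm : ((dm j - 1 : ℕ) : ℤ) = (dm j : ℤ) - 1 := by omega
    have hSp : ∑ k, |(zp k : ℤ) - dp' k| = (∑ k, |(zp k : ℤ) - dp k|) - 1 := by
      rw [← Finset.add_sum_erase _ (fun k => |(zp k : ℤ) - dp' k|) (mem_univ i),
          ← Finset.add_sum_erase _ (fun k => |(zp k : ℤ) - dp k|) (mem_univ i)]
      have he : ∑ k ∈ univ.erase i, |(zp k : ℤ) - dp' k|
          = ∑ k ∈ univ.erase i, |(zp k : ℤ) - dp k| := by
        refine Finset.sum_congr rfl fun k hk => ?_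
        rw [hdp'def, Function.update_of_ne (Finset.ne_of_mem_erase hk)]
      rw [he, hdp'def, Function.update_self, hcastp]
      have h1 : |(zp i : ℤ) - dp i| = (dp i : ℤ) - zp i := by
        rw [abs_sub_comm]; exact abs_of_nonneg (by omega)
      have h2 : |(zp i : ℤ) - ((dp i : ℤ) - 1)| = (dp i : ℤ) - 1 - zp i := by
        rw [abs_sub_comm]; exact abs_of_nonneg (by omega)
      rw [h1, h2]; ring
    have hSm : ∑ k, |(zm k : ℤ) - dm' k| ≤ (∑ k, |(zm k : ℤ) - dm k|) + 1 := by
      rw [← Finset.add_sum_erase _ (fun k => |(zm k : ℤ) - dm' k|) (mem_univ j),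
          ← Finset.add_sum_erase _ (fun k => |(zm k : ℤ) - dm k|) (mem_univ j)]
      have he : ∑ k ∈ univ.erase j, |(zm k : ℤ) - dm' k|
          = ∑ k ∈ univ.erase j, |(zm k : ℤ) - dm k| := by
        refine Finset.sum_congr rfl fun k hk => ?_
        rw [hdm'def, Function.update_of_ne (Finset.ne_of_mem_erase hk)]
      rw [he, hdm'def, Function.update_self, hcastm]
      have h1 : |(zm j : ℤ) - ((dm j : ℤ) - 1)| ≤ |(zm j : ℤ) - dm j| + 1 := by
        have := abs_sub_abs_le_abs_sub ((zm j : ℤ) - ((dm j : ℤ) - 1)) ((zm j : ℤ) - dm j)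
        have h2 : |(zm j : ℤ) - ((dm j : ℤ) - 1) - ((zm j : ℤ) - dm j)| = 1 := by
          norm_num
        omega
      omega
    have hle : (∑ k, |(zp k : ℤ) - dp' k|) + (∑ k, |(zm k : ℤ) - dm' k|)
        ≤ (∑ k, |(zp k : ℤ) - dp k|) + (∑ k, |(zm k : ℤ) - dm k|) := by
      rw [hSp]; omega
    have heq : (∑ k, |(zp k : ℤ) - dp' k|) + (∑ k, |(zm k : ℤ) - dm' k|)
        = (∑ k, |(zp k : ℤ) - dp k|) + (∑ k, |(zm k : ℤ) - dm k|) :=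
      le_antisymm hle (hmin dp' dm' hbg')
    -- sum bound for induction
    have hsum' : ∑ k, dp' k ≤ N := by
      have h1 : ∑ k, dp' k = (dp i - 1) + ∑ k ∈ univ.erase i, dp k := by
        rw [← Finset.add_sum_erase _ dp' (mem_univ i), hdp'def, Function.update_self]
        congr 1
        exact Finset.sum_congr rfl fun k hk =>
          Function.update_of_ne (Finset.ne_of_mem_erase hk) _ _
      have h2 : ∑ k, dp k = dp i + ∑ k ∈ univ.erase i, dp k :=
        (Finset.add_sum_erase _ _ (mem_univ i)).symm
      omega
    obtain ⟨ep, em, hbg'', hle'', heq''⟩ := ih dp' dm' hsum' hbg'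
      (fun ap am h => heq ▸ hmin ap am h)
    exact ⟨ep, em, hbg'', hle'', heq''.trans heq⟩
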